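/- arXiv:1210.7174 — 6 statements merged into one kernel-verified Lean document; each statement's English description precedes it below -/
import Mathlib

section
/- Let W : ℝ → ℝ, let L1, L2, L12, L1m2 > 0 and g1, g2, g12, g1m2 > 0. Define W1(F) = W(‖F e1‖/L1) + W(‖F(e1−e2)‖/L1m2) and W2(F) = W(‖F e2‖/L2) + W(‖F(e1+e2)‖/L12), and the 2×2 matrices G1 = [[g1, g1−g1m2],[0, g1m2]] and G2 = [[g12, 0],[g12−g2, g2]]. Then G1 and G2 are invertible, and for every 2×2 real matrix F one has W_i(F) = W1(F) + W2(F) and W_g(F) = W1(F·G1⁻¹) + W2(F·G2⁻¹). (Third choice of energy-deformation decomposition for the homogeneously recombined lattice (ℤ², {e1, e2, e1±e2}).) -/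
open Matrix

noncomputable section

/-- The basis vector `e₁ = (1,0)` of `ℝ²` with the Euclidean norm. -/
def e1 : EuclideanSpace ℝ (Fin 2) := EuclideanSpace.single 0 1

/-- The basis vector `e₂ = (0,1)` of `ℝ²` with the Euclidean norm. -/
def e2 : EuclideanSpace ℝ (Fin 2) := EuclideanSpace.single 1 1

/-- Initial Cauchy–Born continuum energy density of the lattice `(ℤ², {e₁, e₂, e₁±e₂})`. -/
def Wi (W : ℝ → ℝ) (L1 L2 L12 L1m2 : ℝ) (F : Matrix (Fin 2) (Fin 2) ℝ) : ℝ :=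
  W (‖toEuclideanLin F e1‖ / L1) + W (‖toEuclideanLin F e2‖ / L2) +
    W (‖toEuclideanLin F (e1 + e2)‖ / L12) + W (‖toEuclideanLin F (e1 - e2)‖ / L1m2)

/-- Grown (homogeneously recombined) Cauchy–Born continuum energy density. -/
def Wg (W : ℝ → ℝ) (L1 L2 L12 L1m2 g1 g2 g12 g1m2 : ℝ) (F : Matrix (Fin 2) (Fin 2) ℝ) : ℝ :=
  W (‖toEuclideanLin F e1‖ / (L1 * g1)) + W (‖toEuclideanLin F e2‖ / (L2 * g2)) +
    W (‖toEuclideanLin F (e1 + e2)‖ / (L12 * g12)) +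
    W (‖toEuclideanLin F (e1 - e2)‖ / (L1m2 * g1m2))

/-!
`G1` has the bonds `e1` and `e1 - e2` as eigenvectors, with eigenvalues `g1` and `g1m2`, and `G2`
has `e2` and `e1 + e2`, with eigenvalues `g2` and `g12`. If `G v = g • v` with `g > 0`, then
`‖(F * G⁻¹) v‖ / L = ‖F v‖ / (L * g)`: precomposing with `G⁻¹` turns each rest length into the
grown one, so the two pairs of bonds recombine into `Wg`.
-/

namespace Matrix

variable {n : Type*} [Fintype n] [DecidableEq n]

theorem toEuclideanLin_inv_apply_of_apply_eq_smul {𝕜 : Type*} [RCLike 𝕜] {G : Matrix n n 𝕜}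
    (hG : IsUnit G.det) {g : 𝕜} (hg : g ≠ 0) {v : EuclideanSpace 𝕜 n}
    (hv : toEuclideanLin G v = g • v) :
    toEuclideanLin G⁻¹ v = g⁻¹ • v := by
  calc toEuclideanLin G⁻¹ v = toEuclideanLin G⁻¹ (g⁻¹ • toEuclideanLin G v) := by
        rw [hv, inv_smul_smul₀ hg]
    _ = g⁻¹ • v := by
        rw [map_smul, ← LinearMap.comp_apply, ← toLpLin_mul_same, nonsing_inv_mul G hG,
          toLpLin_one, LinearMap.id_apply]

theorem norm_toEuclideanLin_mul_inv_apply_div {G : Matrix n n ℝ} (hG : IsUnit G.det) {g : ℝ}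
    (hg : 0 < g) {v : EuclideanSpace ℝ n} (hv : toEuclideanLin G v = g • v)
    (F : Matrix n n ℝ) (L : ℝ) :
    ‖toEuclideanLin (F * G⁻¹) v‖ / L = ‖toEuclideanLin F v‖ / (L * g) := by
  rw [toLpLin_mul_same, LinearMap.comp_apply,
    toEuclideanLin_inv_apply_of_apply_eq_smul hG hg.ne' hv, map_smul, norm_smul,
    Real.norm_of_nonneg (inv_nonneg.2 hg.le), inv_mul_eq_div, div_div, mul_comm g]

end Matrix

section EigenvectorsOfGrowth

variable (a b : ℝ)

theorem toEuclideanLin_upper_apply_e1 : toEuclideanLin !![a, a - b; 0, b] e1 = a • e1 := by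
  ext i; fin_cases i <;> simp [e1, toLpLin_apply]

theorem toEuclideanLin_upper_apply_e1_sub_e2 :
    toEuclideanLin !![a, a - b; 0, b] (e1 - e2) = b • (e1 - e2) := by
  ext i; fin_cases i <;> simp [e1, e2, toLpLin_apply]

theorem toEuclideanLin_lower_apply_e2 : toEuclideanLin !![a, 0; a - b, b] e2 = b • e2 := by
  ext i; fin_cases i <;> simp [e2, toLpLin_apply]

theorem toEuclideanLin_lower_apply_e1_add_e2 :
    toEuclideanLin !![a, 0; a - b, b] (e1 + e2) = a • (e1 + e2) := by
  ext i; fin_cases i <;> simp [e1, e2, toLpLin_apply]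

end EigenvectorsOfGrowth

theorem energy_deformation_decomposition_third_choice_general
    (W : ℝ → ℝ) (L1 L2 L12 L1m2 g1 g2 g12 g1m2 : ℝ)
    (hg1 : 0 < g1) (hg2 : 0 < g2) (hg12 : 0 < g12) (hg1m2 : 0 < g1m2) :
    let W1 : Matrix (Fin 2) (Fin 2) ℝ → ℝ := fun F =>
      W (‖toEuclideanLin F e1‖ / L1) + W (‖toEuclideanLin F (e1 - e2)‖ / L1m2)
    let W2 : Matrix (Fin 2) (Fin 2) ℝ → ℝ := fun F =>
      W (‖toEuclideanLin F e2‖ / L2) + W (‖toEuclideanLin F (e1 + e2)‖ / L12)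
    let G1 : Matrix (Fin 2) (Fin 2) ℝ := !![g1, g1 - g1m2; 0, g1m2]
    let G2 : Matrix (Fin 2) (Fin 2) ℝ := !![g12, 0; g12 - g2, g2]
    IsUnit G1 ∧ IsUnit G2 ∧
      ∀ F : Matrix (Fin 2) (Fin 2) ℝ,
        Wi W L1 L2 L12 L1m2 F = W1 F + W2 F ∧
        Wg W L1 L2 L12 L1m2 g1 g2 g12 g1m2 F = W1 (F * G1⁻¹) + W2 (F * G2⁻¹) := by
  intro W1 W2 G1 G2
  have hG1 : IsUnit G1.det := by
    simp only [G1, det_fin_two_of, mul_zero, sub_zero, isUnit_iff_ne_zero]; positivity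
  have hG2 : IsUnit G2.det := by
    simp only [G2, det_fin_two_of, zero_mul, sub_zero, isUnit_iff_ne_zero]; positivity
  refine ⟨(isUnit_iff_isUnit_det G1).2 hG1, (isUnit_iff_isUnit_det G2).2 hG2,
    fun F => ⟨by simp only [Wi, W1, W2]; ring, ?_⟩⟩
  simp only [Wg, W1, W2,
    norm_toEuclideanLin_mul_inv_apply_div hG1 hg1 (toEuclideanLin_upper_apply_e1 _ _),
    norm_toEuclideanLin_mul_inv_apply_div hG1 hg1m2 (toEuclideanLin_upper_apply_e1_sub_e2 _ _),
    norm_toEuclideanLin_mul_inv_apply_div hG2 hg2 (toEuclideanLin_lower_apply_e2 _ _),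
    norm_toEuclideanLin_mul_inv_apply_div hG2 hg12 (toEuclideanLin_lower_apply_e1_add_e2 _ _)]
  ring

/-- Energy-deformation decomposition for the homogeneously recombined lattice
`(ℤ², {e₁, e₂, e₁±e₂})`, third choice of decomposition. -/
theorem energy_deformation_decomposition_third_choice
    (W : ℝ → ℝ) (L1 L2 L12 L1m2 g1 g2 g12 g1m2 : ℝ)
    (hL1 : 0 < L1) (hL2 : 0 < L2) (hL12 : 0 < L12) (hL1m2 : 0 < L1m2)
    (hg1 : 0 < g1) (hg2 : 0 < g2) (hg12 : 0 < g12) (hg1m2 : 0 < g1m2) :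
    let W1 : Matrix (Fin 2) (Fin 2) ℝ → ℝ := fun F =>
      W (‖toEuclideanLin F e1‖ / L1) + W (‖toEuclideanLin F (e1 - e2)‖ / L1m2)
    let W2 : Matrix (Fin 2) (Fin 2) ℝ → ℝ := fun F =>
      W (‖toEuclideanLin F e2‖ / L2) + W (‖toEuclideanLin F (e1 + e2)‖ / L12)
    let G1 : Matrix (Fin 2) (Fin 2) ℝ := !![g1, g1 - g1m2; 0, g1m2]
    let G2 : Matrix (Fin 2) (Fin 2) ℝ := !![g12, 0; g12 - g2, g2]
    IsUnit G1 ∧ IsUnit G2 ∧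
      ∀ F : Matrix (Fin 2) (Fin 2) ℝ,
        Wi W L1 L2 L12 L1m2 F = W1 F + W2 F ∧
        Wg W L1 L2 L12 L1m2 g1 g2 g12 g1m2 F = W1 (F * G1⁻¹) + W2 (F * G2⁻¹) :=
  energy_deformation_decomposition_third_choice_general W L1 L2 L12 L1m2 g1 g2 g12 g1m2 hg1 hg2 hg12
    hg1m2

end
end

section
/- Let g1, g2, g12, g1m2 > 0 and let G be an invertible 2×2 real matrix such that for every 2×2 real matrix F: ‖F·G⁻¹ e1‖ = g1⁻¹·‖F e1‖, ‖F·G⁻¹ e2‖ = g2⁻¹·‖F e2‖, ‖F·G⁻¹(e1+e2)‖ = g12⁻¹·‖F(e1+e2)‖, and ‖F·G⁻¹(e1−e2)‖ = g1m2⁻¹·‖F(e1−e2)‖. Then g1 = g2 = g12 = g1m2. (Failure of the multiplicative decomposition for non-dilational growth: if a single linear growth tensor G reproduces the grown energy term-by-term for the lattice (ℤ², {e1, e2, e1±e2}), then the growth is a dilation and G can be taken to be a multiple of the identity.) -/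
open Matrix

noncomputable section

set_option maxRecDepth 8000

lemma eucl_norm (v : EuclideanSpace ℝ (Fin 2)) : ‖v‖ = Real.sqrt ((v 0)^2 + (v 1)^2) := by
  rw [EuclideanSpace.norm_eq]
  simp [Fin.sum_univ_two, sq_abs]

lemma teu_apply (M : Matrix (Fin 2) (Fin 2) ℝ) (v : EuclideanSpace ℝ (Fin 2)) (i : Fin 2) :
    toEuclideanLin M v i = M i 0 * v 0 + M i 1 * v 1 := by
  rw [Matrix.toEuclideanLin_apply]
  show (M *ᵥ (WithLp.equiv 2 (Fin 2 → ℝ)) v) i = _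
  rw [show ((WithLp.equiv 2 (Fin 2 → ℝ)) v : Fin 2 → ℝ) = fun j => v j from rfl]
  simp [mulVec, dotProduct, Fin.sum_univ_two]

lemma norm_teu (M : Matrix (Fin 2) (Fin 2) ℝ) (v : EuclideanSpace ℝ (Fin 2)) :
    ‖toEuclideanLin M v‖ =
      Real.sqrt ((M 0 0 * v 0 + M 0 1 * v 1)^2 + (M 1 0 * v 0 + M 1 1 * v 1)^2) := by
  rw [eucl_norm, teu_apply, teu_apply]

lemma e1_0 : e1 0 = 1 := by simp [e1, EuclideanSpace.single_apply]
lemma e1_1 : e1 1 = 0 := by simp [e1, EuclideanSpace.single_apply]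
lemma e2_0 : e2 0 = 0 := by simp [e2, EuclideanSpace.single_apply]
lemma e2_1 : e2 1 = 1 := by simp [e2, EuclideanSpace.single_apply]

lemma add_0 : (e1 + e2) 0 = 1 := by
  have : (e1 + e2) 0 = e1 0 + e2 0 := rfl
  rw [this, e1_0, e2_0]; ring
lemma add_1 : (e1 + e2) 1 = 1 := by
  have : (e1 + e2) 1 = e1 1 + e2 1 := rfl
  rw [this, e1_1, e2_1]; ring
lemma sub_0 : (e1 - e2) 0 = 1 := by
  have : (e1 - e2) 0 = e1 0 - e2 0 := rfl
  rw [this, e1_0, e2_0]; ring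
lemma sub_1 : (e1 - e2) 1 = -1 := by
  have : (e1 - e2) 1 = e1 1 - e2 1 := rfl
  rw [this, e1_1, e2_1]; ring

/-- If a single invertible growth tensor `G` reproduces the grown energy term-by-term for the
lattice `(ℤ², {e₁, e₂, e₁±e₂})`, then the growth is a dilation: `g1 = g2 = g12 = g1m2`. -/
theorem multiplicative_decomposition_forces_dilation
    (g1 g2 g12 g1m2 : ℝ) (hg1 : 0 < g1) (hg2 : 0 < g2) (hg12 : 0 < g12) (hg1m2 : 0 < g1m2)
    (G : Matrix (Fin 2) (Fin 2) ℝ) (hG : IsUnit G)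
    (h1 : ∀ F : Matrix (Fin 2) (Fin 2) ℝ,
      ‖toEuclideanLin (F * G⁻¹) e1‖ = g1⁻¹ * ‖toEuclideanLin F e1‖)
    (h2 : ∀ F : Matrix (Fin 2) (Fin 2) ℝ,
      ‖toEuclideanLin (F * G⁻¹) e2‖ = g2⁻¹ * ‖toEuclideanLin F e2‖)
    (h12 : ∀ F : Matrix (Fin 2) (Fin 2) ℝ,
      ‖toEuclideanLin (F * G⁻¹) (e1 + e2)‖ = g12⁻¹ * ‖toEuclideanLin F (e1 + e2)‖)
    (h1m2 : ∀ F : Matrix (Fin 2) (Fin 2) ℝ,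
      ‖toEuclideanLin (F * G⁻¹) (e1 - e2)‖ = g1m2⁻¹ * ‖toEuclideanLin F (e1 - e2)‖) :
    g1 = g2 ∧ g2 = g12 ∧ g12 = g1m2 := by
  set B := G⁻¹ with hB
  -- h1 with F = E00 and E01
  have A1 := h1 !![1,0;0,0]
  have A2 := h1 !![0,1;0,0]
  have B1 := h2 !![1,0;0,0]
  have B2 := h2 !![0,1;0,0]
  have C1 := h12 !![1,0;0,0]
  have C2 := h12 !![0,1;0,0]
  have D1 := h1m2 !![1,0;0,0]
  simp only [norm_teu, Matrix.mul_apply, Fin.sum_univ_two, e1_0, e1_1, e2_0, e2_1,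
    add_0, add_1, sub_0, sub_1, Matrix.cons_val', Matrix.cons_val_zero, Matrix.cons_val_one,
    Matrix.head_cons, Matrix.empty_val', Matrix.cons_val_fin_one, Matrix.head_fin_const,
    mul_one, mul_zero, zero_mul, one_mul, add_zero, zero_add,
    ne_eq, OfNat.ofNat_ne_zero, not_false_eq_true, zero_pow, one_pow,
    Real.sqrt_one, mul_neg, neg_zero, neg_neg] at A1 A2 B1 B2 C1 C2 D1
  norm_num [Matrix.cons_val_zero, Matrix.cons_val_one, Matrix.head_cons] at A1 A2 B1 B2 C1 C2 D1
  rw [Real.sqrt_sq_eq_abs] at A1 A2 B1 B2 C1 C2 D1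
  have hB10 : B 1 0 = 0 := abs_eq_zero.mp A2
  have hB01 : B 0 1 = 0 := abs_eq_zero.mp B1
  have e12 : g1⁻¹ = g12⁻¹ := by rw [← A1, ← C1, hB01, add_zero]
  have e22 : g2⁻¹ = g12⁻¹ := by rw [← B2, ← C2, hB10, zero_add]
  have e1m : g1⁻¹ = g1m2⁻¹ := by rw [← A1, ← D1, hB01, neg_zero, add_zero]
  have q1 : g1 = g12 := inv_injective e12
  have q2 : g2 = g12 := inv_injective e22
  have q3 : g1 = g1m2 := inv_injective e1m
  exact ⟨by rw [q1, q2], by rw [q2], by rw [← q1, q3]⟩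

end
end

section
/- Let D, K ≥ 1, let ι be a finite index type, let v : ι → ℝ^D, and let π : ι → Fin K be such that for each j ∈ Fin K the subfamily (v i)_{i : π i = j} is linearly independent over ℝ. Let L, g : ι → ℝ be positive, and let W : ℝ → ℝ. Define, for each j, W_j(F) = Σ_{i : π i = j} W(‖F(v i)‖ / L i). Then there exist invertible linear maps G_1, …, G_K of ℝ^D such that for every linear map F : ℝ^D → ℝ^D: Σ_{i ∈ ι} W(‖F(v i)‖ / L i) = Σ_{j=1}^K W_j(F) and Σ_{i ∈ ι} W(‖F(v i)‖ / (L i · g i)) = Σ_{j=1}^K W_j(F ∘ G_j⁻¹). (Energy-deformation decomposition for a homogeneously recombined lattice of order K.) -/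
open scoped BigOperators

/-! Within each class `π i = j` the vectors `v i` are linearly independent, so extending them to a
basis and rescaling gives an automorphism `G j` with `G j (v i) = g i • v i`. Then
`‖F ((G j)⁻¹ (v i))‖ = ‖F (v i)‖ / g i`, and both identities are regroupings of the sum over `ι`
along the fibres of `π`. -/

namespace Module.Basis

variable {K V κ : Type*} [DivisionRing K] [AddCommGroup V] [Module K V]

theorem sumExtend_apply_inl {v : κ → V} (hv : LinearIndependent K v) (i : κ) :
    sumExtend hv (Sum.inl i) = v i := by
  simp only [sumExtend, reindex_apply, coe_extend]
  rfl

end Module.Basis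

section Scaling

variable {K V κ : Type*} [Field K] [AddCommGroup V] [Module K V]

theorem LinearIndependent.exists_linearEquiv_apply_eq_smul {v : κ → V}
    (hv : LinearIndependent K v) (c : κ → Kˣ) :
    ∃ G : V ≃ₗ[K] V, ∀ i, G (v i) = c i • v i := by
  let b := Module.Basis.sumExtend hv
  refine ⟨b.equiv (b.unitsSMul (Sum.elim c 1)) (Equiv.refl _), fun i => ?_⟩
  rw [← Module.Basis.sumExtend_apply_inl hv i, Module.Basis.equiv_apply, Equiv.refl_apply,
    Module.Basis.unitsSMul_apply, Sum.elim_inl]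

theorem LinearEquiv.symm_apply_eq_inv_smul (G : V ≃ₗ[K] V) {x : V} {a : K} (ha : a ≠ 0)
    (h : G x = a • x) :
    G.symm x = a⁻¹ • x := by
  rw [LinearEquiv.symm_apply_eq, map_smul, h, smul_smul, inv_mul_cancel₀ ha, one_smul]

end Scaling

theorem energy_deformation_decomposition_orderK_general
    (D K : ℕ) (ι : Type) [Fintype ι]
    (v : ι → EuclideanSpace ℝ (Fin D)) (π : ι → Fin K)
    (hind : ∀ j : Fin K, LinearIndependent ℝ (fun i : {i // π i = j} => v i.1))
    (L g : ι → ℝ) (hg : ∀ i, 0 < g i) (W : ℝ → ℝ) :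
    ∃ G : Fin K → (EuclideanSpace ℝ (Fin D) ≃ₗ[ℝ] EuclideanSpace ℝ (Fin D)),
      ∀ F : EuclideanSpace ℝ (Fin D) →ₗ[ℝ] EuclideanSpace ℝ (Fin D),
        ((∑ i : ι, W (‖F (v i)‖ / L i)) =
          ∑ j : Fin K, ∑ i : {i // π i = j}, W (‖F (v i.1)‖ / L i.1)) ∧
        ((∑ i : ι, W (‖F (v i)‖ / (L i * g i))) =
          ∑ j : Fin K, ∑ i : {i // π i = j},
            W (‖(F ∘ₗ (G j).symm.toLinearMap) (v i.1)‖ / L i.1)) := by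
  choose G hG using fun j => (hind j).exists_linearEquiv_apply_eq_smul
    fun i => Units.mk0 (g i.1) (hg i.1).ne'
  refine ⟨G, fun F => ⟨(Fintype.sum_fiberwise π _).symm, ?_⟩⟩
  rw [← Fintype.sum_fiberwise π]
  refine Finset.sum_congr rfl fun j _ => Finset.sum_congr rfl fun i _ => ?_
  have hGi : (G j).symm (v i.1) = (g i.1)⁻¹ • v i.1 :=
    (G j).symm_apply_eq_inv_smul (hg i.1).ne' (hG j i)
  rw [LinearMap.comp_apply, LinearEquiv.coe_coe, hGi, map_smul, norm_smul, norm_inv,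
    Real.norm_of_nonneg (hg i.1).le, inv_mul_eq_div, div_div, mul_comm (g i.1)]

/-- Energy-deformation decomposition for a homogeneously recombined lattice of order `K`:
if the connectivity vectors `v i` are partitioned (by `π`) into `K` linearly independent
families, then there are invertible linear growth tensors `G 1, …, G K` realising the
decomposition of the initial and grown Cauchy–Born continuum energy densities. -/
theorem energy_deformation_decomposition_orderK
    (D K : ℕ) (hD : 1 ≤ D) (hK : 1 ≤ K) (ι : Type) [Fintype ι]
    (v : ι → EuclideanSpace ℝ (Fin D)) (π : ι → Fin K)
    (hind : ∀ j : Fin K, LinearIndependent ℝ (fun i : {i // π i = j} => v i.1))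
    (L g : ι → ℝ) (hL : ∀ i, 0 < L i) (hg : ∀ i, 0 < g i) (W : ℝ → ℝ) :
    ∃ G : Fin K → (EuclideanSpace ℝ (Fin D) ≃ₗ[ℝ] EuclideanSpace ℝ (Fin D)),
      ∀ F : EuclideanSpace ℝ (Fin D) →ₗ[ℝ] EuclideanSpace ℝ (Fin D),
        ((∑ i : ι, W (‖F (v i)‖ / L i)) =
          ∑ j : Fin K, ∑ i : {i // π i = j}, W (‖F (v i.1)‖ / L i.1)) ∧
        ((∑ i : ι, W (‖F (v i)‖ / (L i * g i))) =
          ∑ j : Fin K, ∑ i : {i // π i = j},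
            W (‖(F ∘ₗ (G j).symm.toLinearMap) (v i.1)‖ / L i.1)) :=
  energy_deformation_decomposition_orderK_general D K ι v π hind L g hg W
end

section
/- Let D ≥ 2, let ι be a finite index type, let v : ι → ℝ^D be a linearly independent family, let L : ι → ℝ be positive, let W : ℝ → ℝ, and define 𝒲(F) = Σ_{i ∈ ι} W(‖F(v i)‖ / L i) for linear maps F of ℝ^D. Then there exist a linear map F₀ : ℝ^D → ℝ^D and a basis b : Fin D → ℝ^D such that ‖F₀(b j)‖ = ‖b j‖ for every j, F₀ does not preserve the inner product (there exist x, y ∈ ℝ^D with ⟨F₀ x, F₀ y⟩ ≠ ⟨x, y⟩), and 𝒲(F₀) = 𝒲(id). (The Cauchy–Born continuum energy density of a homogeneous lattice of order 1 vanishes on a shear, hence is not shear-resisting.) -/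
open scoped BigOperators RealInnerProductSpace

/-!
Extend the lattice vectors `v i` to a basis `b` of `ℝ^D`. Every linear map preserving the
norms of all `b j` preserves the energy, since the energy only sees the norms `‖F (v i)‖`.
Such a map need not be a rotation: sending `b j₁` to the multiple of `b j₀` of the same norm
and fixing the other basis vectors makes `⟪F (b j₀), F (b j₁)⟫ = ‖b j₀‖ ‖b j₁‖`, which is the
equality case of Cauchy–Schwarz, impossible for the independent pair `b j₀, b j₁`.
-/

open Module

theorem LinearIndependent.exists_basis_fin_range_subset_range {K V ι : Type*} [DivisionRing K]
    [AddCommGroup V] [Module K V] [FiniteDimensional K V] {n : ℕ} (hn : finrank K V = n)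
    {v : ι → V} (hv : LinearIndependent K v) :
    ∃ b : Basis (Fin n) K V, Set.range v ⊆ Set.range b := by
  let B := Basis.extend hv.linearIndepOn_id
  refine ⟨B.reindex (B.indexEquiv (finBasisOfFinrankEq K V hn)), ?_⟩
  rw [Basis.range_reindex, Basis.range_extend]
  exact hv.linearIndepOn_id.subset_extend _

section Shear

variable {E : Type*} [NormedAddCommGroup E] [InnerProductSpace ℝ E]

theorem LinearIndependent.real_inner_lt_norm_mul_norm {ι : Type*} {f : ι → E}
    (hf : LinearIndependent ℝ f) {i j : ι} (hij : i ≠ j) : ⟪f i, f j⟫ < ‖f i‖ * ‖f j‖ := by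
  rw [inner_lt_norm_mul_iff_real]
  intro h
  have hcoeffs := (LinearIndepOn.pair_iff f hij).1 (hf.linearIndepOn _) ‖f j‖ (-‖f i‖)
    (by rw [neg_smul, h, add_neg_cancel])
  exact hf.ne_zero j (norm_eq_zero.1 hcoeffs.1)

variable {κ : Type*} [DecidableEq κ] (b : Basis κ ℝ E)

noncomputable def Module.Basis.shear (j₀ j₁ : κ) : E →ₗ[ℝ] E :=
  b.constr ℝ (Function.update b j₁ ((‖b j₁‖ / ‖b j₀‖) • b j₀))

theorem Module.Basis.norm_shear_apply (j₀ j₁ j : κ) : ‖b.shear j₀ j₁ (b j)‖ = ‖b j‖ := by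
  rw [Basis.shear, Basis.constr_basis]
  rcases eq_or_ne j j₁ with rfl | hj
  · have hb₀ : ‖b j₀‖ ≠ 0 := norm_ne_zero_iff.2 (b.ne_zero j₀)
    rw [Function.update_self, norm_smul_of_nonneg (by positivity), div_mul_cancel₀ _ hb₀]
  · rw [Function.update_of_ne hj]

theorem Module.Basis.inner_shear_ne {j₀ j₁ : κ} (h : j₀ ≠ j₁) :
    ⟪b.shear j₀ j₁ (b j₀), b.shear j₀ j₁ (b j₁)⟫ ≠ ⟪b j₀, b j₁⟫ := by
  have hb₀ : ‖b j₀‖ ≠ 0 := norm_ne_zero_iff.2 (b.ne_zero j₀)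
  have hsheared : ⟪b.shear j₀ j₁ (b j₀), b.shear j₀ j₁ (b j₁)⟫ = ‖b j₀‖ * ‖b j₁‖ := by
    rw [Basis.shear, Basis.constr_basis, Basis.constr_basis, Function.update_of_ne h,
      Function.update_self, real_inner_smul_right, real_inner_self_eq_norm_mul_norm]
    field_simp
  exact hsheared ▸ (b.linearIndependent.real_inner_lt_norm_mul_norm h).ne'

end Shear

theorem order_one_energy_vanishes_on_shear_general
    (D : ℕ) (hD : 2 ≤ D) (ι : Type) [Fintype ι]
    (v : ι → EuclideanSpace ℝ (Fin D)) (hv : LinearIndependent ℝ v)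
    (L : ι → ℝ) (W : ℝ → ℝ) :
    ∃ F₀ : EuclideanSpace ℝ (Fin D) →ₗ[ℝ] EuclideanSpace ℝ (Fin D),
      ∃ b : Module.Basis (Fin D) ℝ (EuclideanSpace ℝ (Fin D)),
        (∀ j : Fin D, ‖F₀ (b j)‖ = ‖b j‖) ∧
        (∃ x y : EuclideanSpace ℝ (Fin D), ⟪F₀ x, F₀ y⟫ ≠ ⟪x, y⟫) ∧
        (∑ i : ι, W (‖F₀ (v i)‖ / L i)) =
          ∑ i : ι, W (‖(LinearMap.id : EuclideanSpace ℝ (Fin D) →ₗ[ℝ]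
            EuclideanSpace ℝ (Fin D)) (v i)‖ / L i) := by
  obtain ⟨b, hvb⟩ := hv.exists_basis_fin_range_subset_range (finrank_euclideanSpace_fin (𝕜 := ℝ))
  let j₀ : Fin D := ⟨0, by omega⟩
  let j₁ : Fin D := ⟨1, by omega⟩
  have hj : j₀ ≠ j₁ := by simp [j₀, j₁, Fin.ext_iff]
  refine ⟨b.shear j₀ j₁, b, b.norm_shear_apply j₀ j₁, ⟨b j₀, b j₁, b.inner_shear_ne hj⟩, ?_⟩
  refine Finset.sum_congr rfl fun i _ => ?_
  obtain ⟨j, hvj⟩ := hvb ⟨i, rfl⟩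
  rw [LinearMap.id_apply, ← hvj, b.norm_shear_apply]

/-- The Cauchy–Born continuum energy density of a homogeneous lattice of order 1 vanishes on
a shear: there is a linear map `F₀` preserving the norms of a basis but not the inner product
(hence a shear, not a rotation) with `𝒲(F₀) = 𝒲(id)`. -/
theorem order_one_energy_vanishes_on_shear
    (D : ℕ) (hD : 2 ≤ D) (ι : Type) [Fintype ι]
    (v : ι → EuclideanSpace ℝ (Fin D)) (hv : LinearIndependent ℝ v)
    (L : ι → ℝ) (hL : ∀ i, 0 < L i) (W : ℝ → ℝ) :
    ∃ F₀ : EuclideanSpace ℝ (Fin D) →ₗ[ℝ] EuclideanSpace ℝ (Fin D),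
      ∃ b : Module.Basis (Fin D) ℝ (EuclideanSpace ℝ (Fin D)),
        (∀ j : Fin D, ‖F₀ (b j)‖ = ‖b j‖) ∧
        (∃ x y : EuclideanSpace ℝ (Fin D), ⟪F₀ x, F₀ y⟫ ≠ ⟪x, y⟫) ∧
        (∑ i : ι, W (‖F₀ (v i)‖ / L i)) =
          ∑ i : ι, W (‖(LinearMap.id : EuclideanSpace ℝ (Fin D) →ₗ[ℝ]
            EuclideanSpace ℝ (Fin D)) (v i)‖ / L i) :=
  order_one_energy_vanishes_on_shear_general D hD ι v hv L W
end

section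
/- Let W : ℝ → ℝ and L12, L1m2 > 0, and define W2(F) = W(‖F(e1+e2)‖/L12) + W(‖F(e1−e2)‖/L1m2) for 2×2 real matrices F. For θ ∈ ℝ let B_θ = (1/√2)·[[1−cos θ, 1+cos θ],[−sin θ, sin θ]]. Then for every θ: ‖B_θ(e1+e2)‖ = ‖e1+e2‖ and ‖B_θ(e1−e2)‖ = ‖e1−e2‖, hence W2(B_θ) = W2(I); moreover if cos θ ≠ 0 then ⟨B_θ(e1+e2), B_θ(e1−e2)⟩ ≠ ⟨e1+e2, e1−e2⟩, so B_θ preserves the norms of the basis {e1+e2, e1−e2} without preserving the inner product, i.e., B_θ is a shear on which W2 vanishes (up to the additive constant W2(I)). -/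
open Matrix
open scoped RealInnerProductSpace

noncomputable section

/-! `B_θ` maps `e₁ + e₂` to `(√2, 0)` and `e₁ − e₂` to `−√2 (cos θ, sin θ)`. Both images have
length `√2 = ‖e₁ ± e₂‖`, so `W₂` cannot distinguish `B_θ` from the identity, whereas their inner
product is `−2 cos θ` instead of `⟪e₁ + e₂, e₁ − e₂⟫ = 0`. -/

theorem e1_add_e2 : e1 + e2 = !₂[1, 1] := by
  ext i; fin_cases i <;> simp [e1, e2]

theorem e1_sub_e2 : e1 - e2 = !₂[1, -1] := by
  ext i; fin_cases i <;> simp [e1, e2]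

theorem toEuclideanLin_fin_two {𝕜 : Type*} [RCLike 𝕜] (a b c d x y : 𝕜) :
    toEuclideanLin !![a, b; c, d] !₂[x, y] = !₂[a * x + b * y, c * x + d * y] := by
  ext i; fin_cases i <;> simp [toLpLin_toLp] <;> ring

theorem EuclideanSpace.smul_fin_two {𝕜 : Type*} [RCLike 𝕜] (r x y : 𝕜) :
    r • !₂[x, y] = !₂[r * x, r * y] := by
  ext i; fin_cases i <;> simp

theorem EuclideanSpace.norm_fin_two (x y : ℝ) : ‖!₂[x, y]‖ = √(x ^ 2 + y ^ 2) := by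
  simp [EuclideanSpace.norm_eq, Fin.sum_univ_two]

theorem EuclideanSpace.inner_fin_two (a b c d : ℝ) : ⟪!₂[a, b], !₂[c, d]⟫ = a * c + b * d := by
  simp [PiLp.inner_apply, Fin.sum_univ_two, mul_comm]

def shearMatrix (θ : ℝ) : Matrix (Fin 2) (Fin 2) ℝ :=
  (√2)⁻¹ • !![1 - Real.cos θ, 1 + Real.cos θ; -Real.sin θ, Real.sin θ]

theorem toEuclideanLin_shearMatrix (θ x y : ℝ) :
    toEuclideanLin (shearMatrix θ) !₂[x, y] =
      (√2)⁻¹ • !₂[(x + y) - (x - y) * Real.cos θ, -((x - y) * Real.sin θ)] := by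
  rw [shearMatrix, map_smul, LinearMap.smul_apply, toEuclideanLin_fin_two]
  congr 2
  ext i; fin_cases i <;> simp <;> ring

theorem shearMatrix_apply_e1_add_e2 (θ : ℝ) :
    toEuclideanLin (shearMatrix θ) (e1 + e2) = !₂[√2, 0] := by
  rw [e1_add_e2, toEuclideanLin_shearMatrix, EuclideanSpace.smul_fin_two]
  congr 3 <;> field_simp <;> norm_num

theorem shearMatrix_apply_e1_sub_e2 (θ : ℝ) :
    toEuclideanLin (shearMatrix θ) (e1 - e2) = !₂[-(√2 * Real.cos θ), -(√2 * Real.sin θ)] := by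
  rw [e1_sub_e2, toEuclideanLin_shearMatrix, EuclideanSpace.smul_fin_two]
  congr 3 <;> field_simp <;> norm_num

theorem norm_shearMatrix_apply_e1_add_e2 (θ : ℝ) :
    ‖toEuclideanLin (shearMatrix θ) (e1 + e2)‖ = ‖e1 + e2‖ := by
  rw [shearMatrix_apply_e1_add_e2, e1_add_e2, EuclideanSpace.norm_fin_two,
    EuclideanSpace.norm_fin_two]
  norm_num

theorem norm_shearMatrix_apply_e1_sub_e2 (θ : ℝ) :
    ‖toEuclideanLin (shearMatrix θ) (e1 - e2)‖ = ‖e1 - e2‖ := by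
  rw [shearMatrix_apply_e1_sub_e2, e1_sub_e2, EuclideanSpace.norm_fin_two,
    EuclideanSpace.norm_fin_two]
  congr 1
  linear_combination 2 * Real.sin_sq_add_cos_sq θ +
    (Real.cos θ ^ 2 + Real.sin θ ^ 2) * Real.sq_sqrt (zero_le_two (α := ℝ))

theorem inner_shearMatrix_apply (θ : ℝ) :
    ⟪toEuclideanLin (shearMatrix θ) (e1 + e2), toEuclideanLin (shearMatrix θ) (e1 - e2)⟫ =
      -2 * Real.cos θ := by
  rw [shearMatrix_apply_e1_add_e2, shearMatrix_apply_e1_sub_e2, EuclideanSpace.inner_fin_two]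
  linear_combination (-Real.cos θ) * Real.sq_sqrt (zero_le_two (α := ℝ))

theorem inner_e1_add_e2_e1_sub_e2 : ⟪e1 + e2, e1 - e2⟫ = 0 := by
  rw [e1_add_e2, e1_sub_e2, EuclideanSpace.inner_fin_two]; ring

theorem W2_vanishes_on_shears_general
    (W : ℝ → ℝ) (L12 L1m2 : ℝ) (θ : ℝ) :
    let W2 : Matrix (Fin 2) (Fin 2) ℝ → ℝ := fun F =>
      W (‖toEuclideanLin F (e1 + e2)‖ / L12) + W (‖toEuclideanLin F (e1 - e2)‖ / L1m2)
    let Bθ : Matrix (Fin 2) (Fin 2) ℝ := (Real.sqrt 2)⁻¹ •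
      !![1 - Real.cos θ, 1 + Real.cos θ; -Real.sin θ, Real.sin θ]
    ‖toEuclideanLin Bθ (e1 + e2)‖ = ‖e1 + e2‖ ∧
      ‖toEuclideanLin Bθ (e1 - e2)‖ = ‖e1 - e2‖ ∧
      W2 Bθ = W2 (1 : Matrix (Fin 2) (Fin 2) ℝ) ∧
      (Real.cos θ ≠ 0 →
        ⟪toEuclideanLin Bθ (e1 + e2), toEuclideanLin Bθ (e1 - e2)⟫ ≠ ⟪e1 + e2, e1 - e2⟫) := by
  intro W2 Bθ
  have hadd : ‖toEuclideanLin Bθ (e1 + e2)‖ = ‖e1 + e2‖ := norm_shearMatrix_apply_e1_add_e2 θ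
  have hsub : ‖toEuclideanLin Bθ (e1 - e2)‖ = ‖e1 - e2‖ := norm_shearMatrix_apply_e1_sub_e2 θ
  refine ⟨hadd, hsub, ?_, fun hcos => ?_⟩
  · simp only [W2, hadd, hsub, toLpLin_one, LinearMap.id_apply]
  · rw [show Bθ = shearMatrix θ from rfl, inner_shearMatrix_apply, inner_e1_add_e2_e1_sub_e2]
    simpa using hcos

/-- The next-nearest-neighbour part `W₂` of the Cauchy–Born energy of `(ℤ², {e₁, e₂, e₁±e₂})`
vanishes (up to the additive constant `W₂(I)`) on the one-parameter family of shears
`B_θ = (1/√2)·[[1−cos θ, 1+cos θ],[−sin θ, sin θ]]`: each `B_θ` preserves the norms of the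
basis `{e₁+e₂, e₁−e₂}`, hence `W₂(B_θ) = W₂(I)`, and for `cos θ ≠ 0` it does not preserve
the inner product. -/
theorem W2_vanishes_on_shears
    (W : ℝ → ℝ) (L12 L1m2 : ℝ) (hL12 : 0 < L12) (hL1m2 : 0 < L1m2) (θ : ℝ) :
    let W2 : Matrix (Fin 2) (Fin 2) ℝ → ℝ := fun F =>
      W (‖toEuclideanLin F (e1 + e2)‖ / L12) + W (‖toEuclideanLin F (e1 - e2)‖ / L1m2)
    let Bθ : Matrix (Fin 2) (Fin 2) ℝ := (Real.sqrt 2)⁻¹ •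
      !![1 - Real.cos θ, 1 + Real.cos θ; -Real.sin θ, Real.sin θ]
    ‖toEuclideanLin Bθ (e1 + e2)‖ = ‖e1 + e2‖ ∧
      ‖toEuclideanLin Bθ (e1 - e2)‖ = ‖e1 - e2‖ ∧
      W2 Bθ = W2 (1 : Matrix (Fin 2) (Fin 2) ℝ) ∧
      (Real.cos θ ≠ 0 →
        ⟪toEuclideanLin Bθ (e1 + e2), toEuclideanLin Bθ (e1 - e2)⟫ ≠ ⟪e1 + e2, e1 - e2⟫) :=
  W2_vanishes_on_shears_general W L12 L1m2 θ

end
end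

section
/- Let g1, g2 > 0 with g1 ≠ g2. Define W_i(λ) = (λ − 1)² and W_g(λ) = (1/2)·(λ/g1 − 1)² + (1/2)·(λ/g2 − 1)² for λ ∈ ℝ. Then there is no g > 0 such that W_g(λ) = W_i(λ/g) for all λ > 0. (In a one-dimensional chain with both nearest-neighbour and next-nearest-neighbour Hookean springs, growing by factors g1 and g2 respectively, the continuum energy of the grown system is not a multiplicative-decomposition image of the initial energy unless g1 = g2.) -/
/-- In a one-dimensional chain with nearest-neighbour and next-nearest-neighbour Hookean
springs growing by factors `g1 ≠ g2`, the grown continuum energy density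
`W_g(λ) = ½(λ/g1 − 1)² + ½(λ/g2 − 1)²` is not a multiplicative-decomposition image
`W_i(λ/g)` of the initial energy `W_i(λ) = (λ − 1)²` for any `g > 0`. -/
theorem no_multiplicative_decomposition_1D
    (g1 g2 : ℝ) (hg1 : 0 < g1) (hg2 : 0 < g2) (hne : g1 ≠ g2) :
    ¬ ∃ g : ℝ, 0 < g ∧ ∀ l : ℝ, 0 < l →
      (1 / 2) * (l / g1 - 1) ^ 2 + (1 / 2) * (l / g2 - 1) ^ 2 = (l / g - 1) ^ 2 := by
  rintro ⟨g, hg, h⟩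
  set a := 1 / g1 with ha
  set b := 1 / g2 with hb
  set c := 1 / g with hc
  have h1 := h 1 one_pos
  have h2 := h 2 two_pos
  have e1 : (1/2) * (a - 1)^2 + (1/2) * (b - 1)^2 = (c - 1)^2 := by
    simpa [ha, hb, hc, div_eq_mul_inv] using h1
  have e2 : (1/2) * (2*a - 1)^2 + (1/2) * (2*b - 1)^2 = (2*c - 1)^2 := by
    have := h 2 two_pos
    rw [div_eq_mul_one_div 2 g1, div_eq_mul_one_div 2 g2, div_eq_mul_one_div 2 g] at this
    simpa [ha, hb, hc] using this
  have hab : a ≠ b := by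
    intro hab
    apply hne
    have : g1⁻¹ = g2⁻¹ := by simpa [ha, hb, one_div] using hab
    exact inv_injective this
  have : (a - b)^2 = 0 := by nlinarith [sq_nonneg (a-b), sq_nonneg (a+b-2*c)]
  exact hab (by nlinarith [sq_nonneg (a-b)])
end
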